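/- arXiv:1810.03533 — 3 statements merged into one kernel-verified Lean document; each statement's English description precedes it below -/
import Mathlib

section
/- If S_p ∈ F_p[[X]] satisfies S_p^{p+1} - S_p^2 - S_p + X = 0 with coefficient sequence (s_n), then s_0 = 0, s_1 = 1, and for n ≥ 2, s_n = Σ_{k=1}^{n-1} s_k w_{n-k}, where w_0 = -1, w_n = -s_n if p ∤ n, and w_n = -s_n + s_{n/p} if p ∣ n (for n ≥ 1). -/
/-!
In characteristic `p` the Frobenius gives `S ^ p = S(X ^ p)`, so the defining equation reads
`S * W = -X` with `W = S(X ^ p) - S - 1`, whose coefficients are exactly the `w n`. Since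
`W(0) = -1`, comparing coefficients of `S * W = -X` forces `S(0) = 0`, and then the coefficient
of `X ^ n` expresses `s n` through the lower `s k`.
-/

open PowerSeries Finset

namespace PowerSeries

theorem map_frobenius_expand {R : Type*} [CommRing R] (p : ℕ) (hp : p ≠ 0) [ExpChar R p]
    (f : R⟦X⟧) : map (frobenius R p) (expand p hp f) = f ^ p :=
  MvPowerSeries.map_frobenius_expand p hp

section MulEqNegX

variable {R : Type*} [CommRing R] {f g : R⟦X⟧}

theorem constantCoeff_eq_zero_of_mul_eq_neg_X (hg : constantCoeff g = -1) (hfg : f * g = -X) :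
    constantCoeff f = 0 := by
  simpa [hg] using congrArg constantCoeff hfg

theorem coeff_eq_sum_add_coeff_X_of_mul_eq_neg_X (hg : constantCoeff g = -1)
    (hfg : f * g = -X) {n : ℕ} (hn : 1 ≤ n) :
    coeff n f = ∑ k ∈ Ico 1 n, coeff k f * coeff (n - k) g + coeff n X := by
  have h := congrArg (coeff n) hfg
  rw [coeff_mul, Nat.sum_antidiagonal_eq_sum_range_succ_mk, sum_range_succ,
    sum_range_eq_add_Ico _ hn] at h
  simp only [Nat.sub_zero, Nat.sub_self, coeff_zero_eq_constantCoeff, hg,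
    constantCoeff_eq_zero_of_mul_eq_neg_X hg hfg, map_neg] at h
  linear_combination -h

end MulEqNegX

end PowerSeries

theorem ZMod.powerSeries_pow_card {p : ℕ} [Fact p.Prime] (f : (ZMod p)⟦X⟧) :
    f ^ p = expand p (NeZero.ne p) f := by
  rw [← map_frobenius_expand, ZMod.frobenius_zmod, map_id, id]

theorem inverse_series_recurrence (p : ℕ) (hp : p.Prime)
    (S : PowerSeries (ZMod p))
    (hS : S ^ (p + 1) - S ^ 2 - S + PowerSeries.X = 0)
    (s : ℕ → ZMod p) (hs : ∀ n, s n = PowerSeries.coeff n S)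
    (w : ℕ → ZMod p) (hw0 : w 0 = -1)
    (hw : ∀ n, 1 ≤ n → w n = if p ∣ n then -s n + s (n / p) else -s n) :
    s 0 = 0 ∧ s 1 = 1 ∧
      ∀ n, 2 ≤ n → s n = ∑ k ∈ Finset.Ico 1 n, s k * w (n - k) := by
  have : Fact p.Prime := ⟨hp⟩
  set W := expand p (NeZero.ne p) S - S - 1 with hW_def
  have hSW : S * W = -X := by
    rw [hW_def, ← ZMod.powerSeries_pow_card]
    linear_combination hS
  have hW : ∀ n, coeff n W = w n := by
    rintro (_ | n)
    · simp [W, hw0]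
    · rw [hw _ n.succ_pos]
      simp only [W, map_sub, coeff_expand, coeff_one, hs, n.succ_ne_zero, if_false]
      split_ifs <;> ring
  have hW0 : constantCoeff W = -1 := by rw [← coeff_zero_eq_constantCoeff, hW, hw0]
  have hrec {n} (hn : 1 ≤ n) := coeff_eq_sum_add_coeff_X_of_mul_eq_neg_X hW0 hSW hn
  simp only [hs, ← hW, coeff_zero_eq_constantCoeff_apply]
  refine ⟨constantCoeff_eq_zero_of_mul_eq_neg_X hW0 hSW, by simpa using hrec le_rfl,
    fun n hn => ?_⟩
  rw [hrec (by omega), coeff_X, if_neg (by omega), add_zero]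
end

section
/- The composition inverse C_p of the formal power series F_p = Σ t_n^{(p)} X^n over F_p satisfies (1 - C_p)^{p+1} X^p - (1 - C_p)^2 X + C_p = 0. -/
open PowerSeries

/-- Composition `f(g(X))` of formal power series (meaningful when the
constant coefficient of `g` is zero). -/
noncomputable def PowerSeries.comp {R : Type*} [CommRing R]
    (f g : PowerSeries R) : PowerSeries R :=
  PowerSeries.mk fun n =>
    ∑ k ∈ Finset.range (n + 1), PowerSeries.coeff k f * PowerSeries.coeff n (g ^ k)

/-!
Write `F = F_p` and `G = (1 - X) F`, so that the coefficients of `G` are `t_n - t_{n-1}`.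
From `t_{r + pm} = r + t_m` for `r < p`, this difference is `1` unless `p ∣ n`, and for
`n = p(m+1)` the carry adds `t_{m+1} - t_m`. Hence `G = X/(1 - X) + G(X^p)`, and over `𝔽_p`
we have `G(X^p) = G^p = (1 - X)^p F^p`. Multiplying by `1 - X` gives
`(1 - X)^2 F = X + (1 - X)^(p+1) F^p`; substituting `C` for `X` turns `F` into `X`.
-/

namespace PowerSeries

variable {R : Type*} [CommRing R] {g : R⟦X⟧}

theorem coeff_pow_eq_zero_of_lt (hg : constantCoeff g = 0) {n k : ℕ} (h : n < k) :
    coeff n (g ^ k) = 0 :=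
  X_pow_dvd_iff.mp (pow_dvd_pow_of_dvd (X_dvd_iff.mpr hg) k) n h

theorem comp_eq_subst (hg : constantCoeff g = 0) (f : R⟦X⟧) : f.comp g = f.subst g := by
  ext n
  rw [comp, coeff_mk, coeff_subst' (HasSubst.of_constantCoeff_zero' hg)]
  refine (finsum_eq_sum_of_support_subset _ fun d hd => ?_).symm
  by_contra hdn
  simp only [Finset.coe_range, Set.mem_Iio, not_lt] at hdn
  exact hd (mul_eq_zero_of_right _ (coeff_pow_eq_zero_of_lt hg (by omega)))

end PowerSeries

theorem ZMod.powerSeries_pow_eq_expand (p : ℕ) [Fact p.Prime] (f : (ZMod p)⟦X⟧) :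
    f ^ p = expand p (NeZero.ne p) f := by
  rw [← MvPowerSeries.map_frobenius_expand p (NeZero.ne p), ZMod.frobenius_zmod,
    MvPowerSeries.map_id]
  rfl

theorem Nat.digits_sum_add_mul {b : ℕ} (hb : 1 < b) {r : ℕ} (hr : r < b) (m : ℕ) :
    (Nat.digits b (r + b * m)).sum = r + (Nat.digits b m).sum := by
  rcases eq_or_ne r 0 with rfl | hr0
  · rcases eq_or_ne m 0 with rfl | hm0
    · simp
    · rw [Nat.digits_add b hb 0 m hr (.inr hm0), List.sum_cons]
  · rw [Nat.digits_add b hb r m hr (.inl hr0), List.sum_cons]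

def digitSumMod (p n : ℕ) : ZMod p := (Nat.digits p n).sum

noncomputable def digitSumSeries (p : ℕ) : (ZMod p)⟦X⟧ := mk (digitSumMod p)

section DigitSum

variable {p : ℕ} [Fact p.Prime]

theorem digitSumMod_add_mul {r : ℕ} (hr : r < p) (m : ℕ) :
    digitSumMod p (r + p * m) = r + digitSumMod p m := by
  rw [digitSumMod, digitSumMod, Nat.digits_sum_add_mul (Fact.out : p.Prime).one_lt hr,
    Nat.cast_add]

theorem digitSumMod_succ_sub_of_lt {r : ℕ} (hr : r + 1 < p) (m : ℕ) :
    digitSumMod p (r + 1 + p * m) - digitSumMod p (r + p * m) = 1 := by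
  rw [digitSumMod_add_mul hr, digitSumMod_add_mul (by omega)]
  push_cast
  ring

theorem digitSumMod_mul_succ_sub (m : ℕ) :
    digitSumMod p (p * (m + 1)) - digitSumMod p (p - 1 + p * m) =
      1 + (digitSumMod p (m + 1) - digitSumMod p m) := by
  have hp := (Fact.out : p.Prime).pos
  rw [← zero_add (p * (m + 1)), digitSumMod_add_mul hp, digitSumMod_add_mul (by omega),
    Nat.cast_sub hp, ZMod.natCast_self]
  push_cast
  ring

theorem coeff_succ_one_sub_X_mul_digitSumSeries (n : ℕ) :
    coeff (n + 1) ((1 - X) * digitSumSeries p) = digitSumMod p (n + 1) - digitSumMod p n := by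
  rw [sub_mul, one_mul, map_sub, coeff_succ_X_mul, digitSumSeries, coeff_mk, coeff_mk]

theorem one_sub_X_mul_digitSumSeries :
    (1 - X) * digitSumSeries p =
      X * mk 1 + expand p (NeZero.ne p) ((1 - X) * digitSumSeries p) := by
  have hp := (Fact.out : p.Prime).pos
  ext n
  rcases n with _ | n
  · simp [digitSumSeries, digitSumMod]
  rw [map_add, coeff_succ_X_mul, coeff_mk, coeff_expand, coeff_succ_one_sub_X_mul_digitSumSeries]
  obtain ⟨m, r, hr, rfl⟩ : ∃ m r, r < p ∧ n = r + p * m :=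
    ⟨n / p, n % p, Nat.mod_lt n hp, (Nat.mod_add_div n p).symm⟩
  rcases (Nat.succ_le_of_lt hr).lt_or_eq with hr1 | hr1
  · have hndvd : ¬ p ∣ r + p * m + 1 := by
      rw [add_right_comm, Nat.dvd_add_left (dvd_mul_right p m)]
      exact Nat.not_dvd_of_pos_of_lt r.succ_pos hr1
    rw [if_neg hndvd, add_right_comm, digitSumMod_succ_sub_of_lt hr1, Pi.one_apply, add_zero]
  · have hsucc : r + p * m + 1 = p * (m + 1) := by rw [mul_add]; omega
    rw [hsucc, if_pos (dvd_mul_right p _), Nat.mul_div_cancel_left _ hp,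
      coeff_succ_one_sub_X_mul_digitSumSeries, show r = p - 1 by omega,
      digitSumMod_mul_succ_sub, Pi.one_apply]

theorem one_sub_X_sq_mul_digitSumSeries :
    (1 - X) ^ 2 * digitSumSeries p = X + (1 - X) ^ (p + 1) * digitSumSeries p ^ p := by
  have h := one_sub_X_mul_digitSumSeries (p := p)
  rw [← ZMod.powerSeries_pow_eq_expand, mul_pow] at h
  linear_combination (1 - X) * h + X * mk_one_mul_one_sub_eq_one (ZMod p)

end DigitSum

theorem formal_inverse_equation_general (p : ℕ) (hp : p.Prime)
    (F C : PowerSeries (ZMod p))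
    (hF : F = PowerSeries.mk fun n => ((Nat.digits p n).sum : ZMod p))
    (hC0 : PowerSeries.constantCoeff C = 0)
    (hFC : PowerSeries.comp F C = PowerSeries.X) :
    (1 - C) ^ (p + 1) * PowerSeries.X ^ p - (1 - C) ^ 2 * PowerSeries.X + C = 0 := by
  have : Fact p.Prime := ⟨hp⟩
  have hC : HasSubst C := HasSubst.of_constantCoeff_zero' hC0
  have hFC' : substAlgHom hC (digitSumSeries p) = X := by
    rw [coe_substAlgHom, ← comp_eq_subst hC0, ← hFC, hF]
    rfl
  have key := congrArg (substAlgHom hC) (one_sub_X_sq_mul_digitSumSeries (p := p))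
  simp only [map_add, map_mul, map_pow, map_sub, map_one, substAlgHom_X, hFC'] at key
  linear_combination -key

theorem formal_inverse_equation (p : ℕ) (hp : p.Prime)
    (F C : PowerSeries (ZMod p))
    (hF : F = PowerSeries.mk fun n => ((Nat.digits p n).sum : ZMod p))
    (hC0 : PowerSeries.constantCoeff C = 0)
    (hFC : PowerSeries.comp F C = PowerSeries.X)
    (hCF : PowerSeries.comp C F = PowerSeries.X) :
    (1 - C) ^ (p + 1) * PowerSeries.X ^ p - (1 - C) ^ 2 * PowerSeries.X + C = 0 :=
  formal_inverse_equation_general p hp F C hF hC0 hFC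
end

section
/- Suppose a sequence (a_n) with values in {0,1} satisfies: for every k ∈ ℕ, a_{79·2^k + m} = 0 for all 0 ≤ m < 2^k, and a_{47·2^k + m} = 1 for all 0 ≤ m < 2^k. Then neither the limit lim_{N→∞} |{k < N : a_k = 0}|/N nor lim_{N→∞} |{k < N : a_k = 1}|/N exists. -/
/-!
If the frequency `c N / N` of a value tended to `L`, compare it at `N = p·2^k` and
`N = (p + 1)·2^k`: when the window `[p·2^k, (p + 1)·2^k)` consists only of that value, the
limit gives `(p + 1) L = p L + 1`, so `L = 1`; when the window avoids it, `(p + 1) L = p L`,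
so `L = 0`. The runs at `79·2^k` and `47·2^k` provide both kinds of window for each value.
-/

open Filter Topology

theorem eq_of_tendsto_div_of_add_mul {c : ℕ → ℝ} {L δ : ℝ} {p : ℕ} (hp : 0 < p)
    {s : ℕ → ℕ} (hs : Tendsto s atTop atTop)
    (hL : Tendsto (fun N : ℕ => c N / N) atTop (𝓝 L))
    (hc : ∀ k, c ((p + 1) * s k) = c (p * s k) + δ * s k) : L = δ := by
  have hlo := hL.comp (hs.const_mul_atTop' hp)
  have hhi := hL.comp (hs.const_mul_atTop' p.succ_pos)
  have hlim : Tendsto (fun k => (p + 1 : ℝ) * (c ((p + 1) * s k) / ((p + 1) * s k : ℕ))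
      - p * (c (p * s k) / (p * s k : ℕ))) atTop (𝓝 ((p + 1) * L - p * L)) :=
    (hhi.const_mul _).sub (hlo.const_mul _)
  have hδ : (fun k => (p + 1 : ℝ) * (c ((p + 1) * s k) / ((p + 1) * s k : ℕ))
      - p * (c (p * s k) / (p * s k : ℕ))) =ᶠ[atTop] fun _ => δ := by
    filter_upwards [hs.eventually_ne_atTop 0] with k hk
    have hk' : (s k : ℝ) ≠ 0 := Nat.cast_ne_zero.mpr hk
    have hp' : (p : ℝ) ≠ 0 := Nat.cast_ne_zero.mpr hp.ne'
    push_cast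
    field_simp
    rw [hc]
    ring
  have := tendsto_nhds_unique hlim (tendsto_const_nhds.congr' hδ.symm)
  linarith

theorem Nat.count_add_of_forall {P : ℕ → Prop} [DecidablePred P] {M d : ℕ}
    (h : ∀ m < d, P (M + m)) : Nat.count P (M + d) = Nat.count P M + d := by
  rw [Nat.count_add, Nat.count_of_forall h]

theorem Nat.count_add_of_forall_not {P : ℕ → Prop} [DecidablePred P] {M d : ℕ}
    (h : ∀ m < d, ¬ P (M + m)) : Nat.count P (M + d) = Nat.count P M := by
  rw [Nat.count_add, Nat.count_of_forall_not h, add_zero]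

theorem not_tendsto_count_div_of_runs {P : ℕ → Prop} [DecidablePred P] {p q : ℕ}
    (hp : 0 < p) (hq : 0 < q) {s : ℕ → ℕ} (hs : Tendsto s atTop atTop)
    (hP : ∀ k, ∀ m < s k, P (p * s k + m)) (hnP : ∀ k, ∀ m < s k, ¬ P (q * s k + m)) :
    ¬ ∃ L : ℝ, Tendsto (fun N : ℕ => (Nat.count P N : ℝ) / N) atTop (𝓝 L) := by
  rintro ⟨L, hL⟩
  have hL1 : L = 1 := eq_of_tendsto_div_of_add_mul hp hs hL fun k => by
    rw [add_one_mul, Nat.count_add_of_forall (hP k)]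
    push_cast
    ring
  have hL0 : L = 0 := eq_of_tendsto_div_of_add_mul hq hs hL fun k => by
    rw [add_one_mul, Nat.count_add_of_forall_not (hnP k)]
    ring
  exact one_ne_zero (hL1.symm.trans hL0)

theorem runs_imply_no_frequency_general
    (a : ℕ → ℕ)
    (hrun0 : ∀ k : ℕ, ∀ m < 2 ^ k, a (79 * 2 ^ k + m) = 0)
    (hrun1 : ∀ k : ℕ, ∀ m < 2 ^ k, a (47 * 2 ^ k + m) = 1) :
    (¬ ∃ L : ℝ, Filter.Tendsto
        (fun N : ℕ => (((Finset.range N).filter fun k => a k = 0).card : ℝ) / N)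
        Filter.atTop (nhds L)) ∧
    (¬ ∃ L : ℝ, Filter.Tendsto
        (fun N : ℕ => (((Finset.range N).filter fun k => a k = 1).card : ℝ) / N)
        Filter.atTop (nhds L)) := by
  have hs : Tendsto (fun k : ℕ => 2 ^ k) atTop atTop :=
    tendsto_pow_atTop_atTop_of_one_lt one_lt_two
  simp only [← Nat.count_eq_card_filter_range]
  exact ⟨not_tendsto_count_div_of_runs (p := 79) (q := 47) (by norm_num) (by norm_num) hs
      hrun0 fun k m hm => by simp [hrun1 k m hm],
    not_tendsto_count_div_of_runs (p := 47) (q := 79) (by norm_num) (by norm_num) hs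
      hrun1 fun k m hm => by simp [hrun0 k m hm]⟩

theorem runs_imply_no_frequency
    (a : ℕ → ℕ) (hval : ∀ n, a n = 0 ∨ a n = 1)
    (hrun0 : ∀ k : ℕ, ∀ m < 2 ^ k, a (79 * 2 ^ k + m) = 0)
    (hrun1 : ∀ k : ℕ, ∀ m < 2 ^ k, a (47 * 2 ^ k + m) = 1) :
    (¬ ∃ L : ℝ, Filter.Tendsto
        (fun N : ℕ => (((Finset.range N).filter fun k => a k = 0).card : ℝ) / N)
        Filter.atTop (nhds L)) ∧
    (¬ ∃ L : ℝ, Filter.Tendsto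
        (fun N : ℕ => (((Finset.range N).filter fun k => a k = 1).card : ℝ) / N)
        Filter.atTop (nhds L)) :=
  runs_imply_no_frequency_general a hrun0 hrun1
end
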